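/- arXiv:1502.06500 — 2 statements merged into one kernel-verified Lean document; each statement's English description precedes it below -/
import Mathlib

section
/- For the monic Freud polynomials P_n orthogonal with respect to the weight e^{-x^4} on ℝ, satisfying xP_n = P_{n+1} + c_n P_{n-1} with P_0 = 1, P_1 = x, the recurrence coefficients satisfy the string equation n = 4 c_n (c_{n+1} + c_n + c_{n-1}) for all n ≥ 1, with c_0 = 0 and c_1 = Γ(3/4)/Γ(1/4). -/
/-!
Integrating `(P_n P_{n-1} e^{-x⁴})'` over `ℝ` gives `⟨P_n', P_{n-1}⟩ = 4 ⟨x³ P_n, P_{n-1}⟩`.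
By orthogonality the left side is `n h_{n-1}`, where `h_k = ⟨P_k, P_k⟩`. Applying the
recurrence three times and using `h_k = c_k h_{k-1}` turns the right side into
`4 c_n (c_{n+1} + c_n + c_{n-1}) h_{n-1}`, and `h_{n-1} > 0`. Finally `c_1 = h_1 / h_0` is a
ratio of two moments of `e^{-x⁴}`, which are Gamma values after substituting `u = x⁴`.
-/

open Polynomial MeasureTheory Filter Topology

/-- The Freud inner product `⟨f,g⟩_F = ∫_ℝ f(x) g(x) e^{-x⁴} dx`. -/
noncomputable def innerF (f g : Polynomial ℝ) : ℝ :=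
  ∫ x : ℝ, f.eval x * g.eval x * Real.exp (-x ^ 4)

namespace OrthogonalPolynomial

variable {R : Type*} [CommRing R] {L : R[X] →ₗ[R] R} {P : ℕ → R[X]} {c : ℕ → R}

theorem map_mul_eq_zero_of_degree_lt (horth : ∀ n m : ℕ, m < n → L (P n * X ^ m) = 0)
    {n : ℕ} {q : R[X]} (hq : q.degree < n) : L (P n * q) = 0 := by
  rw [q.as_sum_support_C_mul_X_pow, Finset.mul_sum, map_sum]
  refine Finset.sum_eq_zero fun i hi => ?_
  have hin : i < n := by
    exact_mod_cast (le_degree_of_ne_zero (mem_support_iff.1 hi)).trans_lt hq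
  rw [mul_left_comm, C_mul', map_smul, horth n i hin, smul_zero]

theorem map_mul_eq_zero_of_lt (horth : ∀ n m : ℕ, m < n → L (P n * X ^ m) = 0)
    (hdeg : ∀ n, (P n).natDegree = n) {m k : ℕ} (hmk : m < k) : L (P k * P m) = 0 :=
  map_mul_eq_zero_of_degree_lt horth <|
    degree_le_natDegree.trans_lt (by rw [hdeg]; exact_mod_cast hmk)

theorem map_mul_self_succ (horth : ∀ n m : ℕ, m < n → L (P n * X ^ m) = 0)
    (hdeg : ∀ n, (P n).natDegree = n)
    (hrec : ∀ n, X * P n = P (n + 1) + C (c n) * P (n - 1)) (n : ℕ) :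
    L (P (n + 1) * P (n + 1)) = c (n + 1) * L (P n * P n) := by
  have hP : ∀ {m k}, m < k → L (P k * P m) = 0 := map_mul_eq_zero_of_lt horth hdeg
  calc L (P (n + 1) * P (n + 1)) = L (P (n + 1) * (X * P n)) := by
        rw [hrec n, mul_add, mul_left_comm, C_mul', map_add, map_smul,
          hP (by omega : n - 1 < n + 1), smul_zero, add_zero]
    _ = L ((X * P (n + 1)) * P n) := by ring_nf
    _ = c (n + 1) * L (P n * P n) := by
        rw [hrec (n + 1), Nat.add_sub_cancel, add_mul, mul_assoc, C_mul', map_add, map_smul,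
          hP (by omega : n < n + 2), zero_add, smul_eq_mul]

theorem map_derivative_succ_mul (horth : ∀ n m : ℕ, m < n → L (P n * X ^ m) = 0)
    (hmonic : ∀ n, (P n).Monic) (hdeg : ∀ n, (P n).natDegree = n) (n : ℕ) :
    L (derivative (P (n + 1)) * P n) = (n + 1) * L (P n * P n) := by
  have hlead : ∀ k, (P k).coeff k = 1 := fun k => by
    simpa only [hdeg] using (hmonic k).coeff_natDegree
  have hlower : (derivative (P (n + 1)) - C ((n : R) + 1) * P n).degree < n := by
    refine (degree_lt_iff_coeff_zero _ _).2 fun m hm => ?_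
    rw [coeff_sub, coeff_derivative, coeff_C_mul]
    obtain rfl | hlt := (show n ≤ m by exact_mod_cast hm).eq_or_lt
    · rw [hlead, hlead]; ring
    · rw [coeff_eq_zero_of_natDegree_lt (by rw [hdeg]; omega),
        coeff_eq_zero_of_natDegree_lt (p := P n) (by rw [hdeg]; omega)]
      ring
  rw [← sub_add_cancel (derivative (P (n + 1))) (C ((n : R) + 1) * P n), add_mul, map_add,
    mul_comm, map_mul_eq_zero_of_degree_lt horth hlower, mul_assoc, C_mul', map_smul,
    smul_eq_mul, zero_add]

theorem X_sq_mul_succ (hrec : ∀ n, X * P n = P (n + 1) + C (c n) * P (n - 1)) (n : ℕ) :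
    X ^ 2 * P (n + 1) =
      P (n + 3) + (c (n + 2) + c (n + 1)) • P (n + 1) + (c (n + 1) * c n) • P (n - 1) := by
  have h1 : X * P (n + 1) = P (n + 2) + C (c (n + 1)) * P n := hrec (n + 1)
  have h2 : X * P (n + 2) = P (n + 3) + C (c (n + 2)) * P (n + 1) := hrec (n + 2)
  simp only [smul_eq_C_mul, C_add, C_mul]
  linear_combination X * h1 + h2 + C (c (n + 1)) * hrec n

theorem map_X_pow_three_mul (horth : ∀ n m : ℕ, m < n → L (P n * X ^ m) = 0)
    (hdeg : ∀ n, (P n).natDegree = n)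
    (hrec : ∀ n, X * P n = P (n + 1) + C (c n) * P (n - 1)) (hc0 : c 0 = 0) (n : ℕ) :
    L (X ^ 3 * (P (n + 1) * P n)) =
      c (n + 1) * (c (n + 2) + c (n + 1) + c n) * L (P n * P n) := by
  have hP : ∀ {m k}, m < k → L (P k * P m) = 0 := map_mul_eq_zero_of_lt horth hdeg
  have hsucc := map_mul_self_succ horth hdeg hrec
  have hpred : c n * (c n * L (P (n - 1) * P (n - 1))) = c n * L (P n * P n) := by
    cases n with
    | zero => simp [hc0]
    | succ k => rw [hsucc k, Nat.add_sub_cancel]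
  calc L (X ^ 3 * (P (n + 1) * P n)) = L ((X ^ 2 * P (n + 1)) * (X * P n)) := by ring_nf
    _ = c (n + 1) * (c (n + 2) + c (n + 1) + c n) * L (P n * P n) := by
      rw [X_sq_mul_succ hrec, hrec n, ← smul_eq_C_mul]
      simp only [add_mul, mul_add, smul_mul_assoc, mul_smul_comm, map_add, map_smul, smul_eq_mul]
      rw [mul_comm (P (n - 1)) (P (n + 1)), hP (by omega : n + 1 < n + 3),
        hP (by omega : n - 1 < n + 3), hP (by omega : n - 1 < n + 1), hsucc n]
      linear_combination c (n + 1) * hpred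

theorem string_equation (hL : ∀ Q, L (derivative Q) = 4 * L (X ^ 3 * Q))
    (horth : ∀ n m : ℕ, m < n → L (P n * X ^ m) = 0) (hmonic : ∀ n, (P n).Monic)
    (hdeg : ∀ n, (P n).natDegree = n)
    (hrec : ∀ n, X * P n = P (n + 1) + C (c n) * P (n - 1)) (hc0 : c 0 = 0) (n : ℕ) :
    (n + 1) * L (P n * P n) =
      4 * c (n + 1) * (c (n + 2) + c (n + 1) + c n) * L (P n * P n) := by
  have hlower : (derivative (P n)).degree < ↑(n + 1) :=
    degree_derivative_le.trans_lt <|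
      degree_le_natDegree.trans_lt (by rw [hdeg]; exact_mod_cast n.lt_succ_self)
  have := hL (P (n + 1) * P n)
  rw [derivative_mul, map_add, map_derivative_succ_mul horth hmonic hdeg,
    map_mul_eq_zero_of_degree_lt horth hlower, add_zero,
    map_X_pow_three_mul horth hdeg hrec hc0] at this
  rw [this]; ring

end OrthogonalPolynomial

open Real

theorem integrable_pow_mul_exp_neg_pow_four (i : ℕ) :
    Integrable fun x : ℝ => x ^ i * exp (-x ^ 4) := by
  have hgauss : Integrable fun x : ℝ => exp 1 * |x ^ (i : ℝ) * exp (-1 * x ^ 2)| :=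
    (integrable_rpow_mul_exp_neg_mul_sq one_pos
      (neg_one_lt_zero.trans_le (Nat.cast_nonneg i))).abs.const_mul _
  refine hgauss.mono' (by fun_prop) (Eventually.of_forall fun x => ?_)
  have hexp : exp (-x ^ 4) ≤ exp 1 * exp (-1 * x ^ 2) := by
    rw [← exp_add]
    exact exp_le_exp.2 (by nlinarith [sq_nonneg (x ^ 2 - 1)])
  calc ‖x ^ i * exp (-x ^ 4)‖ = |x ^ i| * exp (-x ^ 4) := by
        rw [norm_mul, norm_eq_abs, norm_eq_abs, abs_exp]
    _ ≤ |x ^ i| * (exp 1 * exp (-1 * x ^ 2)) := by gcongr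
    _ = exp 1 * |x ^ (i : ℝ) * exp (-1 * x ^ 2)| := by rw [rpow_natCast, abs_mul, abs_exp]; ring

theorem integrable_eval_mul_exp_neg_pow_four (Q : ℝ[X]) :
    Integrable fun x : ℝ => Q.eval x * exp (-x ^ 4) := by
  induction Q using Polynomial.induction_on' with
  | add p q hp hq => simp only [eval_add, add_mul]; exact hp.add hq
  | monomial n a =>
    simpa only [eval_monomial, mul_assoc] using (integrable_pow_mul_exp_neg_pow_four n).const_mul a

noncomputable def freudFunctional : ℝ[X] →ₗ[ℝ] ℝ where
  toFun Q := ∫ x : ℝ, Q.eval x * exp (-x ^ 4)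
  map_add' p q := by
    simp only [eval_add, add_mul]
    exact integral_add (integrable_eval_mul_exp_neg_pow_four p)
      (integrable_eval_mul_exp_neg_pow_four q)
  map_smul' a p := by
    simp only [eval_smul, smul_eq_mul, RingHom.id_apply, mul_assoc]
    exact integral_const_mul a _

theorem freudFunctional_apply (Q : ℝ[X]) :
    freudFunctional Q = ∫ x : ℝ, Q.eval x * exp (-x ^ 4) := rfl

theorem innerF_eq_freudFunctional (f g : ℝ[X]) : innerF f g = freudFunctional (f * g) := by
  simp only [innerF, freudFunctional_apply, eval_mul]

theorem freudFunctional_derivative (Q : ℝ[X]) :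
    freudFunctional (derivative Q) = 4 * freudFunctional (X ^ 3 * Q) := by
  have hderiv (x : ℝ) : HasDerivAt (fun y => Q.eval y * exp (-y ^ 4))
      ((derivative Q - C 4 * X ^ 3 * Q).eval x * exp (-x ^ 4)) x := by
    refine ((Q.hasDerivAt x).fun_mul (hasDerivAt_pow 4 x).fun_neg.exp).congr_deriv ?_
    simp only [eval_sub, eval_mul, eval_pow, eval_C, eval_X]
    ring
  have hzero : freudFunctional (derivative Q - C 4 * X ^ 3 * Q) = 0 :=
    integral_eq_zero_of_hasDerivAt_of_integrable hderiv
      (integrable_eval_mul_exp_neg_pow_four _) (integrable_eval_mul_exp_neg_pow_four Q)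
  rwa [map_sub, mul_assoc, C_mul', map_smul, smul_eq_mul, sub_eq_zero] at hzero

theorem freudFunctional_mul_self_pos {Q : ℝ[X]} (hQ : Q ≠ 0) : 0 < freudFunctional (Q * Q) := by
  have hnonneg : 0 ≤ fun x : ℝ => (Q * Q).eval x * exp (-x ^ 4) := fun x => by
    simp only [Pi.zero_apply, eval_mul]
    exact mul_nonneg (mul_self_nonneg _) (exp_pos _).le
  obtain ⟨x₀, hx₀⟩ : ∃ x, Q.eval x ≠ 0 := by
    by_contra! h
    exact hQ (Polynomial.funext (by simpa using h))
  rw [freudFunctional_apply, integral_pos_iff_support_of_nonneg hnonneg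
    (integrable_eval_mul_exp_neg_pow_four _)]
  refine (Continuous.isOpen_support (by fun_prop)).measure_pos volume ⟨x₀, ?_⟩
  simp [hx₀, (exp_pos _).ne']

theorem freudFunctional_X_pow_two_mul (k : ℕ) :
    freudFunctional (X ^ (2 * k)) = Gamma ((2 * k + 1) / 4) / 2 := by
  have heven (x : ℝ) :
      x ^ (2 * k) * exp (-x ^ 4) = |x| ^ ((2 * k : ℕ) : ℝ) * exp (-|x| ^ (4 : ℝ)) := by
    rw [rpow_natCast, show (4 : ℝ) = (4 : ℕ) by norm_num, rpow_natCast,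
      (even_two_mul k).pow_abs, (show Even 4 by decide).pow_abs]
  simp only [freudFunctional_apply, eval_pow, eval_X, heven]
  rw [integral_comp_abs (f := fun x => x ^ ((2 * k : ℕ) : ℝ) * exp (-x ^ (4 : ℝ))),
    integral_rpow_mul_exp_neg_rpow four_pos (neg_one_lt_zero.trans_le (Nat.cast_nonneg _))]
  push_cast
  ring

/-- For the monic Freud polynomials `P n`, orthogonal with respect to the weight
`e^{-x⁴}` on `ℝ`, satisfying `x P_n = P_{n+1} + c_n P_{n-1}` with `P 0 = 1`, `P 1 = X`
and `c 0 = 0`, the recurrence coefficients satisfy the string equation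
`n = 4 c_n (c_{n+1} + c_n + c_{n-1})` for all `n ≥ 1`, and `c 1 = Γ(3/4)/Γ(1/4)`. -/
theorem freud_string_equation
    (P : ℕ → Polynomial ℝ) (c : ℕ → ℝ)
    (hmonic : ∀ n, (P n).Monic) (hdeg : ∀ n, (P n).natDegree = n)
    (horth : ∀ n m : ℕ, m < n → innerF (P n) (X ^ m) = 0)
    (hP0 : P 0 = 1) (hP1 : P 1 = X) (hc0 : c 0 = 0)
    (hrec : ∀ n, 1 ≤ n → X * P n = P (n + 1) + C (c n) * P (n - 1)) :
    (∀ n : ℕ, 1 ≤ n → (n : ℝ) = 4 * c n * (c (n + 1) + c n + c (n - 1))) ∧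
      c 1 = Real.Gamma (3 / 4) / Real.Gamma (1 / 4) := by
  have horth' : ∀ n m : ℕ, m < n → freudFunctional (P n * X ^ m) = 0 := fun n m h => by
    rw [← innerF_eq_freudFunctional, horth n m h]
  -- at `n = 0`, `P (n - 1)` is `P 0` (truncated subtraction), harmless since `c 0 = 0`
  have hrec' : ∀ n, X * P n = P (n + 1) + C (c n) * P (n - 1)
    | 0 => by simp [hP0, hP1, hc0]
    | n + 1 => hrec (n + 1) n.succ_pos
  refine ⟨fun n hn => ?_, ?_⟩
  · obtain ⟨k, rfl⟩ := Nat.exists_eq_add_of_le' hn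
    have hstring := OrthogonalPolynomial.string_equation freudFunctional_derivative horth' hmonic
      hdeg hrec' hc0 k
    rw [Nat.cast_add_one, Nat.add_sub_cancel]
    exact mul_right_cancel₀ (freudFunctional_mul_self_pos (hmonic k).ne_zero).ne' hstring
  · have h1 := OrthogonalPolynomial.map_mul_self_succ horth' hdeg hrec' 0
    have hΓ0 : freudFunctional (P 0 * P 0) = Gamma (1 / 4) / 2 := by
      simpa [hP0] using freudFunctional_X_pow_two_mul 0
    have hΓ1 : freudFunctional (P 1 * P 1) = Gamma (3 / 4) / 2 := by
      have h := freudFunctional_X_pow_two_mul 1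
      norm_num [hP1, ← sq] at h ⊢
      exact h
    rw [hΓ0, hΓ1] at h1
    rw [eq_div_iff (Gamma_pos_of_pos (by norm_num)).ne']
    linarith
end

section
/- Assume λ₂ > 0. Then P_n(n^{1/4}x)/Q_n(n^{1/4}x) converges, uniformly on compact subsets of ℂ \ [-(4/3)^{1/4}, (4/3)^{1/4}], to 2√3 · ( x φ((3/4)^{1/4}x) / (1 + φ((3/4)^{1/4}x)²) )², where φ(z) = z + √(z²−1). -/
open Polynomial MeasureTheory Filter Topology

/-- The Sobolev inner product
`⟨f,g⟩_S = ⟨f,g⟩_F + λ₁ f(0) g(0) + λ₂ f'(0) g'(0)`. -/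
noncomputable def innerS (l1 l2 : ℝ) (f g : Polynomial ℝ) : ℝ :=
  innerF f g + l1 * f.eval 0 * g.eval 0
    + l2 * (Polynomial.derivative f).eval 0 * (Polynomial.derivative g).eval 0

open Filter Topology in
/-- `φ(z) = z + √(z²−1)` (with `√(z²−1) > 0` for `z > 1`), the conformal map of
`ℂ \ [-1,1]` onto the exterior of the closed unit disk; written in the form
`z(1 + √(1 − z⁻²))` which selects the correct branch on all of `ℂ \ [-1,1]`. -/
noncomputable def phi (z : ℂ) : ℂ := z * (1 + (1 - z⁻¹ ^ 2) ^ ((1 : ℂ) / 2))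

/-!
At `w = n^{1/4} z`, dividing the connection formula by `n^{1/2} P_n(w)` gives
`z² Q_n(w)/P_n(w) = (R_{n+1} R_{n+2})⁻¹ + σ_n/√n + (δ_n/n) R_{n-1} R_n` with
`R_m = n^{1/4} P_{m-1}(w)/P_m(w)`. Rescaling `z` by `(n/m)^{1/4} → 1`, the outer ratio asymptotics
give `R_m → G = 12^{1/4}/φ(cz)`, `c = (3/4)^{1/4}`, locally uniformly, and `G⁻² + 1/√3 + G²/12 = z²`
because `φ(cz) + φ(cz)⁻¹ = 2cz`. Hence `P_n/Q_n → 1`; the stated limit is identically `1` for the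
same reason.
-/

open Set Uniformity

theorem TendstoLocallyUniformlyOn.comp_mul_left {M β ι ι' : Type*} [TopologicalSpace M]
    [Monoid M] [ContinuousMul M] [UniformSpace β] {p : Filter ι} {p' : Filter ι'}
    {F : ι' → M → β} {G : M → β} {U : Set M} (hU : IsOpen U)
    (hF : TendstoLocallyUniformlyOn F G p' U) (hG : ContinuousOn G U) {m : ι → ι'}
    (hm : Tendsto m p p') {c : ι → M} (hc : Tendsto c p (𝓝 1)) :
    TendstoLocallyUniformlyOn (fun n z => F (m n) (c n * z)) G p U := by
  rw [hU.tendstoLocallyUniformlyOn_iff_forall_tendsto] at hF ⊢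
  intro x hx
  have hcx : Tendsto (fun y : ι × M => c y.1 * y.2) (p ×ˢ 𝓝 x) (𝓝 x) := by
    simpa using (hc.comp tendsto_fst).mul tendsto_snd
  have hGx := (hG.continuousAt (hU.mem_nhds hx)).tendsto
  have hGG : Tendsto (fun y : ι × M => (G y.2, G (c y.1 * y.2))) (p ×ˢ 𝓝 x) (𝓤 β) :=
    (Uniform.tendsto_nhds_right.1 (hGx.comp tendsto_snd)).uniformity_symm.uniformity_trans
      (Uniform.tendsto_nhds_right.1 (hGx.comp hcx))
  exact hGG.uniformity_trans ((hF x hx).comp ((hm.comp tendsto_fst).prodMk hcx))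

theorem TendstoLocallyUniformlyOn.mul_comp_mul_left {𝕜 ι ι' : Type*} [NormedField 𝕜]
    {p : Filter ι} {p' : Filter ι'} {F : ι' → 𝕜 → 𝕜} {G : 𝕜 → 𝕜} {U : Set 𝕜} (hU : IsOpen U)
    (hF : TendstoLocallyUniformlyOn F G p' U) (hG : ContinuousOn G U) {m : ι → ι'}
    (hm : Tendsto m p p') {c : ι → 𝕜} (hc : Tendsto c p (𝓝 1)) :
    TendstoLocallyUniformlyOn (fun n z => c n * F (m n) (c n * z)) G p U := by
  simpa using (hc.tendstoUniformlyOn_const U).tendstoLocallyUniformlyOn.fun_mul₀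
    (hF.comp_mul_left hU hG hm hc) continuousOn_const hG

theorem TendstoUniformlyOn.eventually_ne_zero {α 𝕜 ι : Type*} [TopologicalSpace α]
    [NormedField 𝕜] {p : Filter ι} {F : ι → α → 𝕜} {f : α → 𝕜} {K : Set α} (hK : IsCompact K)
    (hF : TendstoUniformlyOn F f p K) (hf : ContinuousOn f K) (hf0 : ∀ z ∈ K, f z ≠ 0) :
    ∀ᶠ n in p, ∀ z ∈ K, F n z ≠ 0 := by
  have h0 : (f '' K)ᶜ ∈ 𝓝 (0 : 𝕜) :=
    (hK.image_of_continuousOn hf).isClosed.isOpen_compl.mem_nhds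
      fun ⟨z, hz, hfz⟩ => hf0 z hz hfz
  obtain ⟨ε, hε, hball⟩ := Metric.mem_nhds_iff.1 h0
  filter_upwards [Metric.tendstoUniformlyOn_iff.1 hF ε hε] with n hn z hz hFz
  refine hball ?_ (mem_image_of_mem f hz)
  simpa [hFz] using hn z hz

theorem Complex.cpow_one_div_two_sq (x : ℂ) : (x ^ ((1 : ℂ) / 2)) ^ 2 = x := by
  rw [one_div]
  exact Complex.cpow_ofNat_inv_pow x 2

theorem one_add_phi_sq {w : ℂ} (hw : w ≠ 0) : 1 + phi w ^ 2 = 2 * w * phi w := by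
  have hu := Complex.cpow_one_div_two_sq (1 - w⁻¹ ^ 2)
  have hw' : w * w⁻¹ = 1 := mul_inv_cancel₀ hw
  rw [phi]
  linear_combination w ^ 2 * hu - (w * w⁻¹ + 1) * hw'

theorem phi_ne_zero {w : ℂ} (hw : w ≠ 0) : phi w ≠ 0 := by
  refine mul_ne_zero hw fun h => ?_
  have hu : (1 - w⁻¹ ^ 2) ^ ((1 : ℂ) / 2) = -1 := by linear_combination h
  have hbase : 1 - w⁻¹ ^ 2 = 1 := by
    rw [← Complex.cpow_one_div_two_sq (1 - w⁻¹ ^ 2), hu]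
    norm_num
  rw [hbase, Complex.one_cpow] at hu
  norm_num at hu

theorem continuousAt_phi {w : ℂ} (hw : w ∉ (fun t : ℝ => (t : ℂ)) '' Icc (-1) 1) :
    ContinuousAt phi w := by
  have hw0 : w ≠ 0 := fun h => hw ⟨0, by norm_num, by simp [h]⟩
  -- `1 - w⁻²` can only hit the branch cut `(-∞, 0)` if `w⁻¹` is real with `|w⁻¹| > 1`.
  have hbase : 0 ≤ (1 - w⁻¹ ^ 2).re ∨ (1 - w⁻¹ ^ 2).im ≠ 0 := by
    by_contra! h
    obtain ⟨hre, him⟩ := h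
    set v := w⁻¹ with hv
    simp only [Complex.sub_re, Complex.one_re, Complex.sub_im, Complex.one_im, sq,
      Complex.mul_re, Complex.mul_im] at hre him
    have hvim : v.im = 0 := by
      rcases mul_eq_zero.1 (show v.re * v.im = 0 by linarith) with h | h
      · nlinarith
      · exact h
    have hvre : 1 < |v.re| := by
      rw [hvim] at hre
      exact one_lt_sq_iff_one_lt_abs _ |>.1 (by nlinarith)
    refine hw ⟨v.re⁻¹, ?_, ?_⟩
    · rw [mem_Icc, ← abs_le, abs_inv]
      exact inv_le_one_of_one_le₀ hvre.le
    · rw [← inv_inv w, ← hv, ← Complex.re_add_im v, hvim]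
      simp
  have hsqrt := Complex.continuousAt_cpow_const_of_re_pos hbase
    (by norm_num : (0 : ℝ) < ((1 : ℂ) / 2).re)
  have hinner : ContinuousAt (fun z : ℂ => 1 - z⁻¹ ^ 2) w := by fun_prop (disch := exact hw0)
  exact continuousAt_id.mul
    (continuousAt_const.add (hsqrt.comp (f := fun z : ℂ => 1 - z⁻¹ ^ 2) hinner))

theorem rpow_one_div_four_sq {x : ℝ} (hx : 0 ≤ x) : (x ^ ((1 : ℝ) / 4)) ^ 2 = √x := by
  rw [← Real.rpow_natCast, ← Real.rpow_mul hx, Real.sqrt_eq_rpow]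
  norm_num

theorem rpow_one_div_four_pow_four {x : ℝ} (hx : 0 ≤ x) : (x ^ ((1 : ℝ) / 4)) ^ 4 = x := by
  rw [← Real.rpow_natCast, ← Real.rpow_mul hx]
  norm_num

theorem ofReal_rpow_ne_zero {x : ℝ} (hx : 0 < x) (y : ℝ) : ((x ^ y : ℝ) : ℂ) ≠ 0 :=
  Complex.ofReal_ne_zero.2 (Real.rpow_pos_of_pos hx y).ne'

theorem sq_ofReal_rpow_three_quarters :
    (((3 / 4 : ℝ) ^ ((1 : ℝ) / 4) : ℝ) : ℂ) ^ 2 = √3 / 2 := by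
  rw [← Complex.ofReal_pow, rpow_one_div_four_sq (by norm_num),
    Real.sqrt_div' _ (by norm_num : (0 : ℝ) ≤ 4), show (4 : ℝ) = 2 ^ 2 by norm_num,
    Real.sqrt_sq (by norm_num)]
  push_cast
  ring

theorem sq_ofReal_rpow_twelve : (((12 : ℝ) ^ ((1 : ℝ) / 4) : ℝ) : ℂ) ^ 2 = 2 * √3 := by
  rw [← Complex.ofReal_pow, rpow_one_div_four_sq (by norm_num),
    show (12 : ℝ) = 2 ^ 2 * 3 by norm_num, Real.sqrt_mul (by norm_num),
    Real.sqrt_sq (by norm_num)]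
  push_cast
  ring

theorem sq_ofReal_sqrt_three : ((√3 : ℝ) : ℂ) ^ 2 = 3 := by
  rw [← Complex.ofReal_pow, Real.sq_sqrt (by norm_num)]
  norm_num

def freudSegment : Set ℂ :=
  (fun t : ℝ => (t : ℂ)) '' Icc (-((4 / 3 : ℝ) ^ ((1 : ℝ) / 4))) ((4 / 3 : ℝ) ^ ((1 : ℝ) / 4))

theorem isOpen_compl_freudSegment : IsOpen freudSegmentᶜ :=
  (isCompact_Icc.image Complex.continuous_ofReal).isClosed.isOpen_compl

theorem ne_zero_of_notMem_freudSegment {z : ℂ} (hz : z ∉ freudSegment) : z ≠ 0 := by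
  rintro rfl
  have ha : (0 : ℝ) ≤ (4 / 3 : ℝ) ^ ((1 : ℝ) / 4) := by positivity
  exact hz ⟨0, ⟨neg_nonpos.2 ha, ha⟩, Complex.ofReal_zero⟩

theorem mem_image_Icc_of_mul_mem {c : ℝ} (hc : 0 < c) {z : ℂ}
    (h : (c : ℂ) * z ∈ (fun t : ℝ => (t : ℂ)) '' Icc (-1) 1) :
    z ∈ (fun t : ℝ => (t : ℂ)) '' Icc (-c⁻¹) c⁻¹ := by
  obtain ⟨t, ⟨ht₁, ht₂⟩, hzt⟩ := h
  refine ⟨c⁻¹ * t, ⟨by nlinarith [inv_pos.2 hc], by nlinarith [inv_pos.2 hc]⟩, ?_⟩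
  have hc0 : (c : ℂ) ≠ 0 := by exact_mod_cast hc.ne'
  simp only [Complex.ofReal_mul, Complex.ofReal_inv, hzt]
  field_simp

theorem mul_notMem_Icc_of_notMem_freudSegment {z : ℂ} (hz : z ∉ freudSegment) :
    (((3 / 4 : ℝ) ^ ((1 : ℝ) / 4) : ℝ) : ℂ) * z ∉ (fun t : ℝ => (t : ℂ)) '' Icc (-1) 1 := by
  intro h
  have hinv : ((3 / 4 : ℝ) ^ ((1 : ℝ) / 4))⁻¹ = (4 / 3 : ℝ) ^ ((1 : ℝ) / 4) := by
    rw [← Real.inv_rpow (by norm_num)]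
    norm_num
  have hmem := mem_image_Icc_of_mul_mem (by positivity) h
  rw [hinv] at hmem
  exact hz hmem

noncomputable def freudRatioLimit (z : ℂ) : ℂ :=
  (((12 : ℝ) ^ ((1 : ℝ) / 4) : ℝ) : ℂ) / phi ((((3 / 4 : ℝ) ^ ((1 : ℝ) / 4) : ℝ) : ℂ) * z)

theorem phi_mul_ne_zero {z : ℂ} (hz : z ≠ 0) :
    phi ((((3 / 4 : ℝ) ^ ((1 : ℝ) / 4) : ℝ) : ℂ) * z) ≠ 0 :=
  phi_ne_zero (mul_ne_zero (ofReal_rpow_ne_zero (by norm_num) _) hz)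

theorem freudRatioLimit_ne_zero {z : ℂ} (hz : z ≠ 0) : freudRatioLimit z ≠ 0 :=
  div_ne_zero (ofReal_rpow_ne_zero (by norm_num) _) (phi_mul_ne_zero hz)

theorem continuousOn_freudRatioLimit : ContinuousOn freudRatioLimit freudSegmentᶜ := fun _ hz =>
  (continuousAt_const.div ((continuousAt_phi (mul_notMem_Icc_of_notMem_freudSegment hz)).comp
    (continuousAt_const.mul continuousAt_id))
    (phi_mul_ne_zero (ne_zero_of_notMem_freudSegment hz))).continuousWithinAt

theorem freudRatioLimit_inv_sq_add_sq {z : ℂ} (hz : z ≠ 0) :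
    (freudRatioLimit z * freudRatioLimit z)⁻¹ + ((1 / √3 : ℝ) : ℂ)
      + ((1 / 12 : ℝ) : ℂ) * (freudRatioLimit z * freudRatioLimit z) = z ^ 2 := by
  have hφ := phi_mul_ne_zero hz
  have hid := one_add_phi_sq (mul_ne_zero (ofReal_rpow_ne_zero (by norm_num : (0 : ℝ) < 3 / 4)
    ((1 : ℝ) / 4)) hz)
  have hc := sq_ofReal_rpow_three_quarters
  have hs := sq_ofReal_sqrt_three
  have hs0 : ((√3 : ℝ) : ℂ) ≠ 0 := Complex.ofReal_ne_zero.2 (by positivity)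
  rw [freudRatioLimit, div_mul_div_comm, ← sq, ← sq, sq_ofReal_rpow_twelve]
  generalize (((3 / 4 : ℝ) ^ ((1 : ℝ) / 4) : ℝ) : ℂ) = c at *
  generalize phi (c * z) = φ at *
  push_cast
  field_simp
  linear_combination 12 * (1 + φ ^ 2 + 2 * c * z * φ) * hid + 48 * z ^ 2 * φ ^ 2 * hc + 4 * hs

theorem mul_sq_div_one_add_phi_sq_eq_one {z : ℂ} (hz : z ≠ 0) :
    ((2 * √3 : ℝ) : ℂ) * ((z * phi ((((3 / 4 : ℝ) ^ ((1 : ℝ) / 4) : ℝ) : ℂ) * z)) /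
      (1 + phi ((((3 / 4 : ℝ) ^ ((1 : ℝ) / 4) : ℝ) : ℂ) * z) ^ 2)) ^ 2 = 1 := by
  have hc0 := ofReal_rpow_ne_zero (by norm_num : (0 : ℝ) < 3 / 4) ((1 : ℝ) / 4)
  have hφ := phi_mul_ne_zero hz
  have hc := sq_ofReal_rpow_three_quarters
  rw [one_add_phi_sq (mul_ne_zero hc0 hz)]
  generalize (((3 / 4 : ℝ) ^ ((1 : ℝ) / 4) : ℝ) : ℂ) = c at *
  generalize phi (c * z) = φ at *
  push_cast
  field_simp
  linear_combination (-2) * hc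

noncomputable def freudScale (n : ℕ) : ℝ := (n : ℝ) ^ ((1 : ℝ) / 4)

theorem freudScale_pos {n : ℕ} (hn : n ≠ 0) : 0 < freudScale n :=
  Real.rpow_pos_of_pos (by positivity) _

theorem tendsto_freudScale_div {m : ℕ → ℕ} (d : ℝ) (hm : ∀ᶠ n in atTop, (m n : ℝ) = n + d) :
    Tendsto (fun n => (freudScale n : ℂ) / freudScale (m n)) atTop (𝓝 1) := by
  have hquot : Tendsto (fun n : ℕ => (n : ℝ) / m n) atTop (𝓝 1) :=
    (tendsto_natCast_div_add_atTop d).congr' (hm.mono fun n hn => by simp only [hn])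
  have hroot := hquot.rpow_const (p := (1 : ℝ) / 4) (Or.inr (by norm_num))
  rw [Real.one_rpow] at hroot
  simpa only [freudScale, Complex.ofReal_div, Complex.ofReal_one,
    Real.div_rpow (Nat.cast_nonneg _) (Nat.cast_nonneg _)] using hroot.ofReal

noncomputable def scaledRatio (P : ℕ → ℝ[X]) (n : ℕ) (z : ℂ) : ℂ :=
  (freudScale n : ℂ) * ((P (n - 1)).map (algebraMap ℝ ℂ)).eval (freudScale n * z) /
    ((P n).map (algebraMap ℝ ℂ)).eval (freudScale n * z)

noncomputable def rescaledRatio (P : ℕ → ℝ[X]) (m : ℕ → ℕ) (n : ℕ) (z : ℂ) : ℂ :=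
  (freudScale n : ℂ) / freudScale (m n) *
    scaledRatio P (m n) ((freudScale n : ℂ) / freudScale (m n) * z)

theorem rescaledRatio_eq (P : ℕ → ℝ[X]) {m : ℕ → ℕ} {n : ℕ} (hm : m n ≠ 0) (z : ℂ) :
    rescaledRatio P m n z = (freudScale n : ℂ) *
      ((P (m n - 1)).map (algebraMap ℝ ℂ)).eval (freudScale n * z) /
        ((P (m n)).map (algebraMap ℝ ℂ)).eval (freudScale n * z) := by
  have hs : (freudScale (m n) : ℂ) ≠ 0 := Complex.ofReal_ne_zero.2 (freudScale_pos hm).ne'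
  have harg : (freudScale (m n) : ℂ) * ((freudScale n : ℂ) / freudScale (m n) * z)
      = freudScale n * z := by
    field_simp
  rw [rescaledRatio, scaledRatio, harg]
  field_simp

theorem tendstoLocallyUniformlyOn_rescaledRatio {P : ℕ → ℝ[X]}
    (hP : TendstoLocallyUniformlyOn (scaledRatio P) freudRatioLimit atTop freudSegmentᶜ)
    {m : ℕ → ℕ} (hm : Tendsto m atTop atTop) (d : ℝ) (hmd : ∀ᶠ n in atTop, (m n : ℝ) = n + d) :
    TendstoLocallyUniformlyOn (rescaledRatio P m) freudRatioLimit atTop freudSegmentᶜ :=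
  hP.mul_comp_mul_left isOpen_compl_freudSegment continuousOn_freudRatioLimit hm
    (tendsto_freudScale_div d hmd)

-- `z² Q_n(w)/P_n(w)` at `w = n^{1/4} z`, expanded by the connection formula.
noncomputable def connectionQuotient (P : ℕ → ℝ[X]) (sig del : ℕ → ℝ) (n : ℕ) (z : ℂ) : ℂ :=
  (rescaledRatio P (· + 1) n z * rescaledRatio P (· + 2) n z)⁻¹ + ((sig n / √n : ℝ) : ℂ)
    + ((del n / n : ℝ) : ℂ) * (rescaledRatio P (· - 1) n z * scaledRatio P n z)

theorem div_eq_of_three_term {K : Type*} [Field K] {r z q a₀ a₁ a₂ b₁ b₂ σ δ : K}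
    (hr : r ≠ 0) (hz : z ≠ 0) (ha₀ : a₀ ≠ 0) (ha₁ : a₁ ≠ 0) (hb₁ : b₁ ≠ 0)
    (h : (r * z) ^ 2 * q = a₂ + σ * a₀ + δ * b₂) :
    a₀ / q = z ^ 2 / ((r * a₀ / a₁ * (r * a₁ / a₂))⁻¹ + σ / r ^ 2
      + δ / r ^ 4 * (r * b₂ / b₁ * (r * b₁ / a₀))) := by
  have hden : (r * a₀ / a₁ * (r * a₁ / a₂))⁻¹ + σ / r ^ 2
      + δ / r ^ 4 * (r * b₂ / b₁ * (r * b₁ / a₀)) = z ^ 2 * q / a₀ := by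
    rw [show r * a₀ / a₁ * (r * a₁ / a₂) = r ^ 2 * a₀ / a₂ by field_simp, inv_div]
    field_simp
    linear_combination (-1) * h
  rw [hden, div_div_eq_mul_div, mul_div_mul_left _ _ (pow_ne_zero 2 hz)]

theorem eval_div_eval_eq_div_connectionQuotient {P Q : ℕ → ℝ[X]} {sig del : ℕ → ℝ} {n : ℕ}
    (hn : 2 ≤ n) (hconn : X ^ 2 * Q n = P (n + 2) + C (sig n) * P n + C (del n) * P (n - 2))
    {z : ℂ} (hz : z ≠ 0) (h₁ : rescaledRatio P (· + 1) n z ≠ 0) (h₀ : scaledRatio P n z ≠ 0) :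
    ((P n).map (algebraMap ℝ ℂ)).eval (freudScale n * z) /
      ((Q n).map (algebraMap ℝ ℂ)).eval (freudScale n * z)
      = z ^ 2 / connectionQuotient P sig del n z := by
  rw [rescaledRatio_eq P (m := (· + 1)) (by omega)] at h₁
  rw [scaledRatio] at h₀
  set r : ℂ := (freudScale n : ℂ) with hr
  have hr0 : r ≠ 0 := Complex.ofReal_ne_zero.2 (freudScale_pos (by omega)).ne'
  have hr2 : ((√n : ℝ) : ℂ) = r ^ 2 := by
    rw [hr, ← Complex.ofReal_pow, freudScale, rpow_one_div_four_sq (Nat.cast_nonneg n)]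
  have hr4 : ((n : ℝ) : ℂ) = r ^ 4 := by
    rw [hr, ← Complex.ofReal_pow, freudScale, rpow_one_div_four_pow_four (Nat.cast_nonneg n)]
  have hconn_z := congrArg (fun p : ℝ[X] => (p.map (algebraMap ℝ ℂ)).eval (r * z)) hconn
  simp only [Polynomial.map_mul, Polynomial.map_add, Polynomial.map_pow, Polynomial.map_X,
    Polynomial.map_C, eval_mul, eval_add, eval_pow, eval_X, eval_C,
    Complex.coe_algebraMap] at hconn_z
  rw [connectionQuotient, rescaledRatio_eq P (m := (· + 1)) (by omega),
    rescaledRatio_eq P (m := (· + 2)) (by omega), rescaledRatio_eq P (m := (· - 1)) (by omega),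
    scaledRatio, Complex.ofReal_div, Complex.ofReal_div, hr2, hr4]
  simp only [Nat.add_sub_cancel, show n + 2 - 1 = n + 1 by omega,
    show n - 1 - 1 = n - 2 by omega, div_ne_zero_iff, mul_ne_zero_iff] at h₁ h₀ ⊢
  exact div_eq_of_three_term hr0 hz h₀.2 h₁.2 h₀.1.2 hconn_z

theorem tendstoLocallyUniformlyOn_connectionQuotient {P : ℕ → ℝ[X]} {sig del : ℕ → ℝ}
    (hP : TendstoLocallyUniformlyOn (scaledRatio P) freudRatioLimit atTop freudSegmentᶜ)
    (hsig : Tendsto (fun n => sig n / √n) atTop (𝓝 (1 / √3)))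
    (hdel : Tendsto (fun n => del n / n) atTop (𝓝 (1 / 12))) :
    TendstoLocallyUniformlyOn (connectionQuotient P sig del) (fun z => z ^ 2) atTop
      freudSegmentᶜ := by
  have hG := continuousOn_freudRatioLimit
  have hGG := hG.mul hG
  have hGG0 : ∀ z ∈ freudSegmentᶜ, freudRatioLimit z * freudRatioLimit z ≠ 0 := fun _ hz =>
    have := freudRatioLimit_ne_zero (ne_zero_of_notMem_freudSegment hz)
    mul_ne_zero this this
  have hnext := tendstoLocallyUniformlyOn_rescaledRatio hP (tendsto_add_atTop_nat 1) 1
    (.of_forall fun n => by push_cast; ring)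
  have hnext₂ := tendstoLocallyUniformlyOn_rescaledRatio hP (tendsto_add_atTop_nat 2) 2
    (.of_forall fun n => by push_cast; ring)
  have hprev := tendstoLocallyUniformlyOn_rescaledRatio hP (tendsto_sub_atTop_nat 1) (-1)
    ((eventually_ge_atTop 1).mono fun n hn => by push_cast [hn]; ring)
  have hσ := (hsig.ofReal.tendstoUniformlyOn_const freudSegmentᶜ).tendstoLocallyUniformlyOn
  have hδ := (hdel.ofReal.tendstoUniformlyOn_const freudSegmentᶜ).tendstoLocallyUniformlyOn
  refine ((((hnext.fun_mul₀ hnext₂ hG hG).fun_inv₀ hGG hGG0).fun_add hσ).fun_add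
    (hδ.fun_mul₀ (hprev.fun_mul₀ hP hG hG) continuousOn_const hGG)).congr_right fun z hz => ?_
  exact freudRatioLimit_inv_sq_add_sq (ne_zero_of_notMem_freudSegment hz)

open Filter Topology in
theorem sobolev_freud_ratio_asymptotics_lambda2_pos_general
    (P Q : ℕ → Polynomial ℝ)
    (sig del : ℕ → ℝ)
    (hconn : ∀ n, 2 ≤ n →
      X ^ 2 * Q n = P (n + 2) + C (sig n) * P n + C (del n) * P (n - 2))
    (hsig : Tendsto (fun n => sig n / Real.sqrt n) atTop (𝓝 (1 / Real.sqrt 3)))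
    (hdel : Tendsto (fun n => del n / n) atTop (𝓝 (1 / 12)))
    (hPratio : ∀ K : Set ℂ, IsCompact K →
      K ⊆ ((fun t : ℝ => (t : ℂ)) ''
          Set.Icc (-((4 / 3 : ℝ) ^ ((1 : ℝ) / 4))) ((4 / 3 : ℝ) ^ ((1 : ℝ) / 4)))ᶜ →
      TendstoUniformlyOn
        (fun (n : ℕ) (z : ℂ) =>
          (((n : ℝ) ^ ((1 : ℝ) / 4) : ℝ) : ℂ) *
              ((P (n - 1)).map (algebraMap ℝ ℂ)).eval ((((n : ℝ) ^ ((1 : ℝ) / 4) : ℝ) : ℂ) * z) /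
            ((P n).map (algebraMap ℝ ℂ)).eval ((((n : ℝ) ^ ((1 : ℝ) / 4) : ℝ) : ℂ) * z))
        (fun z => (((12 : ℝ) ^ ((1 : ℝ) / 4) : ℝ) : ℂ) /
          phi ((((3 / 4 : ℝ) ^ ((1 : ℝ) / 4) : ℝ) : ℂ) * z))
        atTop K) :
    ∀ K : Set ℂ, IsCompact K →
      K ⊆ ((fun t : ℝ => (t : ℂ)) ''
          Set.Icc (-((4 / 3 : ℝ) ^ ((1 : ℝ) / 4))) ((4 / 3 : ℝ) ^ ((1 : ℝ) / 4)))ᶜ →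
      TendstoUniformlyOn
        (fun (n : ℕ) (z : ℂ) =>
          ((P n).map (algebraMap ℝ ℂ)).eval ((((n : ℝ) ^ ((1 : ℝ) / 4) : ℝ) : ℂ) * z) /
            ((Q n).map (algebraMap ℝ ℂ)).eval ((((n : ℝ) ^ ((1 : ℝ) / 4) : ℝ) : ℂ) * z))
        (fun z => (2 * Real.sqrt 3 : ℝ) *
          ((z * phi ((((3 / 4 : ℝ) ^ ((1 : ℝ) / 4) : ℝ) : ℂ) * z)) /
            (1 + phi ((((3 / 4 : ℝ) ^ ((1 : ℝ) / 4) : ℝ) : ℂ) * z) ^ 2)) ^ 2)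
        atTop K := by
  have hcompact {F : ℕ → ℂ → ℂ} {f : ℂ → ℂ} :
      TendstoLocallyUniformlyOn F f atTop freudSegmentᶜ ↔
        ∀ K ⊆ freudSegmentᶜ, IsCompact K → TendstoUniformlyOn F f atTop K :=
    tendstoLocallyUniformlyOn_iff_forall_isCompact isOpen_compl_freudSegment
  have hP : TendstoLocallyUniformlyOn (scaledRatio P) freudRatioLimit atTop freudSegmentᶜ :=
    hcompact.2 fun K hKU hK => hPratio K hK hKU
  have hz0 : ∀ z ∈ freudSegmentᶜ, z ≠ 0 := fun _ hz => ne_zero_of_notMem_freudSegment hz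
  have hsq : TendstoLocallyUniformlyOn (fun (_ : ℕ) (z : ℂ) => z ^ 2) (fun z => z ^ 2) atTop
      freudSegmentᶜ := fun _ hu _ _ =>
    ⟨univ, univ_mem, .of_forall fun _ _ _ => refl_mem_uniformity hu⟩
  have hlim := hsq.fun_div₀ (tendstoLocallyUniformlyOn_connectionQuotient hP hsig hdel)
    (continuousOn_pow 2) (continuousOn_pow 2) fun z hz => pow_ne_zero 2 (hz0 z hz)
  intro K hK hKU
  have hGK := continuousOn_freudRatioLimit.mono hKU
  have hG0K : ∀ z ∈ K, freudRatioLimit z ≠ 0 := fun z hz =>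
    freudRatioLimit_ne_zero (hz0 z (hKU hz))
  have hne₁ := (hcompact.1 (tendstoLocallyUniformlyOn_rescaledRatio hP (tendsto_add_atTop_nat 1)
    1 (.of_forall fun n => by push_cast; ring)) K hKU hK).eventually_ne_zero hK hGK hG0K
  have hne₀ := (hcompact.1 hP K hKU hK).eventually_ne_zero hK hGK hG0K
  refine ((hcompact.1 hlim K hKU hK).congr ?_).congr_right fun z hz => ?_
  · filter_upwards [hne₁, hne₀, eventually_ge_atTop 2] with n h₁ h₀ hn z hz
    exact (eval_div_eval_eq_div_connectionQuotient hn (hconn n hn) (hz0 z (hKU hz)) (h₁ z hz)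
      (h₀ z hz)).symm
  · dsimp only
    rw [div_self (pow_ne_zero 2 (hz0 z (hKU hz))),
      mul_sq_div_one_add_phi_sq_eq_one (hz0 z (hKU hz))]

open Filter Topology in
/-- Case `λ₂ > 0`: uniformly on compact subsets of `ℂ \ [-(4/3)^{1/4}, (4/3)^{1/4}]`,
`P_n(n^{1/4} x)/Q_n(n^{1/4} x) → 2√3 · (x φ((3/4)^{1/4} x)/(1 + φ((3/4)^{1/4} x)²))²`. -/
theorem sobolev_freud_ratio_asymptotics_lambda2_pos
    (l1 l2 : ℝ) (hl1 : 0 ≤ l1) (hl2 : 0 < l2)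
    (P Q : ℕ → Polynomial ℝ) (c k khat : ℕ → ℝ)
    (hPmonic : ∀ n, (P n).Monic) (hPdeg : ∀ n, (P n).natDegree = n)
    (hPorth : ∀ n m : ℕ, m < n → innerF (P n) (X ^ m) = 0)
    (hQmonic : ∀ n, (Q n).Monic) (hQdeg : ∀ n, (Q n).natDegree = n)
    (hQorth : ∀ n m : ℕ, m < n → innerS l1 l2 (Q n) (X ^ m) = 0)
    (hP0 : P 0 = 1) (hP1 : P 1 = X)
    (hrec : ∀ n, 1 ≤ n → X * P n = P (n + 1) + C (c n) * P (n - 1))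
    (hk : ∀ n, k n = innerF (P n) (P n))
    (hkhat : ∀ n, khat n = innerS l1 l2 (Q n) (Q n))
    (sig del : ℕ → ℝ)
    (hconn : ∀ n, 2 ≤ n →
      X ^ 2 * Q n = P (n + 2) + C (sig n) * P n + C (del n) * P (n - 2))
    (hsig : Tendsto (fun n => sig n / Real.sqrt n) atTop (𝓝 (1 / Real.sqrt 3)))
    (hdel : Tendsto (fun n => del n / n) atTop (𝓝 (1 / 12)))
    (hPratio : ∀ K : Set ℂ, IsCompact K →
      K ⊆ ((fun t : ℝ => (t : ℂ)) ''
          Set.Icc (-((4 / 3 : ℝ) ^ ((1 : ℝ) / 4))) ((4 / 3 : ℝ) ^ ((1 : ℝ) / 4)))ᶜ →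
      TendstoUniformlyOn
        (fun (n : ℕ) (z : ℂ) =>
          (((n : ℝ) ^ ((1 : ℝ) / 4) : ℝ) : ℂ) *
              ((P (n - 1)).map (algebraMap ℝ ℂ)).eval ((((n : ℝ) ^ ((1 : ℝ) / 4) : ℝ) : ℂ) * z) /
            ((P n).map (algebraMap ℝ ℂ)).eval ((((n : ℝ) ^ ((1 : ℝ) / 4) : ℝ) : ℂ) * z))
        (fun z => (((12 : ℝ) ^ ((1 : ℝ) / 4) : ℝ) : ℂ) /
          phi ((((3 / 4 : ℝ) ^ ((1 : ℝ) / 4) : ℝ) : ℂ) * z))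
        atTop K) :
    ∀ K : Set ℂ, IsCompact K →
      K ⊆ ((fun t : ℝ => (t : ℂ)) ''
          Set.Icc (-((4 / 3 : ℝ) ^ ((1 : ℝ) / 4))) ((4 / 3 : ℝ) ^ ((1 : ℝ) / 4)))ᶜ →
      TendstoUniformlyOn
        (fun (n : ℕ) (z : ℂ) =>
          ((P n).map (algebraMap ℝ ℂ)).eval ((((n : ℝ) ^ ((1 : ℝ) / 4) : ℝ) : ℂ) * z) /
            ((Q n).map (algebraMap ℝ ℂ)).eval ((((n : ℝ) ^ ((1 : ℝ) / 4) : ℝ) : ℂ) * z))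
        (fun z => (2 * Real.sqrt 3 : ℝ) *
          ((z * phi ((((3 / 4 : ℝ) ^ ((1 : ℝ) / 4) : ℝ) : ℂ) * z)) /
            (1 + phi ((((3 / 4 : ℝ) ^ ((1 : ℝ) / 4) : ℝ) : ℂ) * z) ^ 2)) ^ 2)
        atTop K :=
  sobolev_freud_ratio_asymptotics_lambda2_pos_general P Q sig del hconn hsig hdel hPratio
end
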